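/- arXiv:1605.06618 — 5 statements merged into one kernel-verified Lean document; each statement's English description precedes it below -/
import Mathlib

section
/- Fix N∈ℕ and real numbers 0<p'≤p. If h∈ℋ_p and ∫_{𝕏_T} h(s,x)^{p'} ν_T(ds,dx)<∞, then sup_{g∈S^N} ∫_{𝕏_T} h(s,x)^{p'}·(g(s,x)+1) ν_T(ds,dx) < ∞. -/
open MeasureTheory Real
open scoped ENNReal

/-! The Fenchel–Young inequality `x b ≤ eˣ + b log b - b`, applied with `x = δ h^{p'}` and
integrated, gives `δ ∫ h^{p'} g ≤ ∫ (exp (δ h^{p'}) - 1) + L_T(g) ≤ ∫ (exp (δ h^{p'}) - 1) + N`.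
The last integral is finite: on `{h ≥ 1}`, a set of finite measure by Markov's inequality, it is
dominated by `exp (δ hᵖ)`, and on `{h < 1}` by `δ e^δ h^{p'}`. -/

lemma Real.mul_le_exp_add_mul_log_sub (x : ℝ) {b : ℝ} (hb : 0 ≤ b) :
    x * b ≤ exp x + (b * log b - b) := by
  rcases hb.eq_or_lt with rfl | hb
  · simpa using (exp_pos x).le
  calc x * b ≤ b * exp (x - log b) + (b * log b - b) := by
        nlinarith [add_one_le_exp (x - log b)]
    _ = exp x + (b * log b - b) := by rw [exp_sub, exp_log hb, mul_div_cancel₀ _ hb.ne']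

lemma Real.exp_sub_one_le_mul_exp (x : ℝ) : exp x - 1 ≤ x * exp x := by
  have h := mul_le_mul_of_nonneg_right (add_one_le_exp (-x)) (exp_pos x).le
  rw [← exp_add, neg_add_cancel, exp_zero] at h
  linarith

section

variable {α : Type*} [MeasurableSpace α] {μ : Measure α}

lemma lintegral_ofReal_exp_sub_one_lt_top {u v : α → ℝ} (hu : Measurable u) (hu0 : 0 ≤ u)
    {δ : ℝ} (hδ : 0 ≤ δ) {s : Set α} (hs : MeasurableSet s) (huv : ∀ a ∈ s, u a ≤ v a)
    (hu1 : ∀ a ∉ s, u a ≤ 1) (hv : ∫⁻ a in s, ENNReal.ofReal (exp (δ * v a)) ∂μ < ⊤)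
    (hu_int : ∫⁻ a, ENNReal.ofReal (u a) ∂μ < ⊤) :
    ∫⁻ a, ENNReal.ofReal (exp (δ * u a) - 1) ∂μ < ⊤ := by
  have hbound : ∀ a, ENNReal.ofReal (exp (δ * u a) - 1) ≤
      s.indicator (fun a => ENNReal.ofReal (exp (δ * v a))) a +
        ENNReal.ofReal (δ * exp δ) * ENNReal.ofReal (u a) := by
    intro a
    by_cases ha : a ∈ s
    · rw [Set.indicator_of_mem ha]
      refine le_add_right (ENNReal.ofReal_le_ofReal ?_)
      have := exp_le_exp.2 (mul_le_mul_of_nonneg_left (huv a ha) hδ)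
      linarith
    · rw [Set.indicator_of_notMem ha, ← ENNReal.ofReal_mul (by positivity)]
      refine le_add_left (ENNReal.ofReal_le_ofReal ?_)
      have hδu : δ * u a ≤ δ := mul_le_of_le_one_right hδ (hu1 a ha)
      calc exp (δ * u a) - 1 ≤ δ * u a * exp (δ * u a) := exp_sub_one_le_mul_exp _
        _ ≤ δ * u a * exp δ := by gcongr; exact mul_nonneg hδ (hu0 a)
        _ = δ * exp δ * u a := by ring
  calc ∫⁻ a, ENNReal.ofReal (exp (δ * u a) - 1) ∂μ
      ≤ ∫⁻ a, (s.indicator (fun a => ENNReal.ofReal (exp (δ * v a))) a +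
        ENNReal.ofReal (δ * exp δ) * ENNReal.ofReal (u a)) ∂μ := lintegral_mono hbound
    _ = (∫⁻ a in s, ENNReal.ofReal (exp (δ * v a)) ∂μ) +
        ENNReal.ofReal (δ * exp δ) * ∫⁻ a, ENNReal.ofReal (u a) ∂μ := by
      rw [lintegral_add_right _ (hu.ennreal_ofReal.const_mul _),
        lintegral_const_mul _ hu.ennreal_ofReal, lintegral_indicator hs]
    _ < ⊤ := ENNReal.add_lt_top.2 ⟨hv, ENNReal.mul_lt_top ENNReal.ofReal_lt_top hu_int⟩

lemma lintegral_ofReal_mul_le {u g : α → ℝ} (hu : Measurable u) (hg : Measurable g) (hg0 : 0 ≤ g) {δ : ℝ} (hδ : 0 < δ) :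
    ∫⁻ a, ENNReal.ofReal (u a * g a) ∂μ ≤
      (∫⁻ a, ENNReal.ofReal (exp (δ * u a) - 1) ∂μ +
        ∫⁻ a, ENNReal.ofReal (g a * log (g a) - g a + 1) ∂μ) / ENNReal.ofReal δ := by
  rw [ENNReal.le_div_iff_mul_le (.inl (ENNReal.ofReal_pos.2 hδ).ne') (.inl ENNReal.ofReal_ne_top),
    mul_comm, ← lintegral_const_mul _ (f := fun a => ENNReal.ofReal (u a * g a))
      (hu.mul hg).ennreal_ofReal,
    ← lintegral_add_left ((hu.const_mul δ).exp.sub_const 1).ennreal_ofReal]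
  refine lintegral_mono fun a => ?_
  rw [← ENNReal.ofReal_mul hδ.le]
  refine (ENNReal.ofReal_le_ofReal ?_).trans ENNReal.ofReal_add_le
  have := mul_le_exp_add_mul_log_sub (δ * u a) (hg0 a)
  linarith

lemma lintegral_ofReal_mul_add_one {u g : α → ℝ} (hu : Measurable u) (hu0 : 0 ≤ u)
    (hg0 : 0 ≤ g) :
    ∫⁻ a, ENNReal.ofReal (u a * (g a + 1)) ∂μ =
      ∫⁻ a, ENNReal.ofReal (u a * g a) ∂μ + ∫⁻ a, ENNReal.ofReal (u a) ∂μ := by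
  rw [← lintegral_add_right _ hu.ennreal_ofReal]
  refine lintegral_congr fun a => ?_
  rw [← ENNReal.ofReal_add (mul_nonneg (hu0 a) (hg0 a)) (hu0 a), mul_add_one]

end

theorem stmt_0_general
    {𝕏 : Type*} [MeasurableSpace 𝕏]
    (νT : Measure (ℝ × 𝕏))
    (N : ℕ) (p p' : ℝ) (hp' : 0 < p') (hpp' : p' ≤ p)
    (h : ℝ × 𝕏 → ℝ) (hm : Measurable h) (hnn : ∀ q, 0 ≤ h q)
    (hHp : ∃ δ : ℝ, 0 < δ ∧ ∀ Γ : Set (ℝ × 𝕏), MeasurableSet Γ → νT Γ < ⊤ →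
        ∫⁻ q in Γ, ENNReal.ofReal (Real.exp (δ * h q ^ p)) ∂νT < ⊤)
    (hint : ∫⁻ q, ENNReal.ofReal (h q ^ p') ∂νT < ⊤) :
    (⨆ g ∈ {g : ℝ × 𝕏 → ℝ | Measurable g ∧ (∀ q, 0 ≤ g q) ∧
        ∫⁻ q, ENNReal.ofReal (g q * Real.log (g q) - g q + 1) ∂νT ≤ (N : ℝ≥0∞)},
      ∫⁻ q, ENNReal.ofReal (h q ^ p' * (g q + 1)) ∂νT) < ⊤ := by
  obtain ⟨δ, hδ, hexp⟩ := hHp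
  have hu : Measurable fun q => h q ^ p' := hm.pow_const p'
  have hu0 : 0 ≤ fun q => h q ^ p' := fun q => rpow_nonneg (hnn q) p'
  have hs : MeasurableSet {q | 1 ≤ h q} := measurableSet_le measurable_const hm
  have hs_fin : νT {q | 1 ≤ h q} < ⊤ := by
    refine lt_of_le_of_lt ?_ hint
    calc νT {q | 1 ≤ h q} ≤ νT {q | 1 ≤ ENNReal.ofReal (h q ^ p')} :=
          measure_mono fun q hq => by simpa using one_le_rpow hq hp'.le
      _ ≤ _ := by simpa using mul_meas_ge_le_lintegral hu.ennreal_ofReal (μ := νT) 1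
  have hE := lintegral_ofReal_exp_sub_one_lt_top hu hu0 hδ.le hs
    (fun q hq => rpow_le_rpow_of_exponent_le hq hpp')
    (fun q hq => rpow_le_one (hnn q) (not_le.1 hq).le hp'.le) (hexp _ hs hs_fin) hint
  refine lt_of_le_of_lt (iSup₂_le fun g ⟨hg, hg0, hgN⟩ => ?_) (ENNReal.add_lt_top.2
    ⟨ENNReal.div_lt_top (ENNReal.add_ne_top.2 ⟨hE.ne, ENNReal.natCast_ne_top N⟩)
      (ENNReal.ofReal_pos.2 hδ).ne', hint⟩)
  rw [lintegral_ofReal_mul_add_one hu hu0 hg0]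
  gcongr
  exact (lintegral_ofReal_mul_le hu hg hg0 hδ).trans (by gcongr)

theorem stmt_0
    {𝕏 : Type*} [TopologicalSpace 𝕏] [PolishSpace 𝕏] [LocallyCompactSpace 𝕏]
    [MeasurableSpace 𝕏] [BorelSpace 𝕏]
    (T : ℝ) (hT : 0 < T)
    (ν : Measure 𝕏) [SigmaFinite ν] (hνK : ∀ Kc : Set 𝕏, IsCompact Kc → ν Kc < ⊤)
    (νT : Measure (ℝ × 𝕏)) (hνT : νT = (volume.restrict (Set.Icc 0 T)).prod ν)
    (N : ℕ) (p p' : ℝ) (hp' : 0 < p') (hpp' : p' ≤ p)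
    (h : ℝ × 𝕏 → ℝ) (hm : Measurable h) (hnn : ∀ q, 0 ≤ h q)
    (hHp : ∃ δ : ℝ, 0 < δ ∧ ∀ Γ : Set (ℝ × 𝕏), MeasurableSet Γ → νT Γ < ⊤ →
        ∫⁻ q in Γ, ENNReal.ofReal (Real.exp (δ * h q ^ p)) ∂νT < ⊤)
    (hint : ∫⁻ q, ENNReal.ofReal (h q ^ p') ∂νT < ⊤) :
    (⨆ g ∈ {g : ℝ × 𝕏 → ℝ | Measurable g ∧ (∀ q, 0 ≤ g q) ∧
        ∫⁻ q, ENNReal.ofReal (g q * Real.log (g q) - g q + 1) ∂νT ≤ (N : ℝ≥0∞)},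
      ∫⁻ q, ENNReal.ofReal (h q ^ p' * (g q + 1)) ∂νT) < ⊤ :=
  stmt_0_general νT N p p' hp' hpp' h hm hnn hHp hint
end

section
/- Fix N∈ℕ. If h∈ℋ_2 and ∫_{𝕏_T} h(s,x)² ν_T(ds,dx)<∞, then sup_{g∈S^N} ∫_{𝕏_T} h(s,x)·|g(s,x)−1| ν_T(ds,dx) < ∞. -/
/-!
With `l = klFun`, Young's inequality `z b ≤ l b + (exp z - 1)` bounds `h |g - 1|` pointwise:
where `h ≤ 1` by `h² + l g` (as `exp s - 1 - s ≤ s²` for `|s| ≤ 1`), and where `h ≥ 1` by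
`h² + δ⁻¹ (exp (δ h²) + l g)` (taking `z = δ h`). Since `h ∈ L²`, the set `{h ≥ 1}` has finite
measure, so `exp (δ h²)` is integrable there, and integrating gives a bound
`∫ h² + δ⁻¹ ∫_{h ≥ 1} exp (δ h²) + (1 + δ⁻¹) N` uniform over `g ∈ S^N`.
-/

open MeasureTheory Real InformationTheory
open scoped ENNReal

/-- Fenchel–Young inequality for `klFun`, whose convex conjugate is `z ↦ exp z - 1`. -/
lemma mul_le_klFun_add_exp_sub_one (z : ℝ) {b : ℝ} (hb : 0 ≤ b) :
    z * b ≤ klFun b + (exp z - 1) := by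
  rcases hb.eq_or_lt with rfl | hb
  · simp [klFun_zero, (exp_pos z).le]
  · have h := add_one_le_exp (z - log b)
    rw [exp_sub, exp_log hb, le_div_iff₀ hb] at h
    rw [klFun_apply]
    linarith

lemma abs_mul_sub_one_le_sq_add_klFun {s b : ℝ} (hs : |s| ≤ 1) (hb : 0 ≤ b) :
    |s * (b - 1)| ≤ s ^ 2 + klFun b := by
  have hexp (t : ℝ) (ht : |t| ≤ 1) : t * (b - 1) ≤ t ^ 2 + klFun b := by
    have := (abs_le.mp (abs_exp_sub_one_sub_id_le ht)).2
    linarith [mul_le_klFun_add_exp_sub_one t hb]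
  refine abs_le'.mpr ⟨hexp s hs, ?_⟩
  have := hexp (-s) (by rwa [abs_neg])
  linarith [neg_sq s]

lemma mul_abs_sub_one_le_of_one_le {δ a b : ℝ} (hδ : 0 < δ) (ha : 1 ≤ a) (hb : 0 ≤ b) :
    a * |b - 1| ≤ a ^ 2 + δ⁻¹ * (exp (δ * a ^ 2) + klFun b) := by
  have hsq : a ≤ a ^ 2 := by nlinarith
  have hyoung : δ * a * b ≤ klFun b + exp (δ * a ^ 2) := by
    have := exp_le_exp.mpr (mul_le_mul_of_nonneg_left hsq hδ.le)
    linarith [mul_le_klFun_add_exp_sub_one (δ * a) hb]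
  have hab : a * b ≤ δ⁻¹ * (exp (δ * a ^ 2) + klFun b) := by
    rw [← div_eq_inv_mul, le_div_iff₀ hδ]
    linarith
  have : |b - 1| ≤ b + 1 := abs_le.mpr ⟨by linarith, by linarith⟩
  nlinarith

lemma mul_abs_sub_one_le {δ a b : ℝ} (hδ : 0 < δ) (ha : 0 ≤ a) (hb : 0 ≤ b) :
    a * |b - 1| ≤
      a ^ 2 + (if 1 ≤ a then δ⁻¹ * exp (δ * a ^ 2) else 0) + (1 + δ⁻¹) * klFun b := by
  have hkl := klFun_nonneg hb
  have hδinv : 0 ≤ δ⁻¹ := inv_nonneg.mpr hδ.le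
  split_ifs with ha1
  · nlinarith [mul_abs_sub_one_le_of_one_le hδ ha1 hb]
  · have := abs_mul_sub_one_le_sq_add_klFun (s := a) (abs_le.mpr ⟨by linarith, by linarith⟩) hb
    rw [abs_mul, abs_of_nonneg ha] at this
    nlinarith

section Integrals

variable {α : Type*} [MeasurableSpace α] {μ : Measure α} {h : α → ℝ}

lemma measure_one_le_lt_top_of_lintegral_sq_lt_top (hm : Measurable h)
    (hint : ∫⁻ q, ENNReal.ofReal (h q ^ 2) ∂μ < ⊤) : μ {q | 1 ≤ h q} < ⊤ := by
  have hmarkov := mul_meas_ge_le_lintegral (hm.pow_const 2).ennreal_ofReal (μ := μ) 1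
  rw [one_mul] at hmarkov
  refine lt_of_le_of_lt (le_trans (measure_mono fun q (hq : 1 ≤ h q) => ?_) hmarkov) hint
  rw [Set.mem_ofPred_eq, ← ENNReal.ofReal_one]
  exact ENNReal.ofReal_le_ofReal (by nlinarith)

lemma lintegral_mul_abs_sub_one_le (hm : Measurable h) (hnn : ∀ q, 0 ≤ h q) {g : α → ℝ}
    (hg : ∀ q, 0 ≤ g q) {δ : ℝ} (hδ : 0 < δ) :
    ∫⁻ q, ENNReal.ofReal (h q * |g q - 1|) ∂μ ≤
      ∫⁻ q, ENNReal.ofReal (h q ^ 2) ∂μ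
        + ENNReal.ofReal δ⁻¹ * ∫⁻ q in {q | 1 ≤ h q}, ENNReal.ofReal (exp (δ * h q ^ 2)) ∂μ
        + ENNReal.ofReal (1 + δ⁻¹) * ∫⁻ q, ENNReal.ofReal (klFun (g q)) ∂μ := by
  have hΓ : MeasurableSet {q | 1 ≤ h q} := measurableSet_le measurable_const hm
  have hsq : Measurable fun q => ENNReal.ofReal (h q ^ 2) := (hm.pow_const 2).ennreal_ofReal
  have hexp : Measurable fun q => ENNReal.ofReal δ⁻¹ * ENNReal.ofReal (exp (δ * h q ^ 2)) :=
    (((hm.pow_const 2).const_mul δ).exp.ennreal_ofReal).const_mul _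
  have hpt (q : α) : ENNReal.ofReal (h q * |g q - 1|) ≤
      ENNReal.ofReal (h q ^ 2)
        + {q | 1 ≤ h q}.indicator
            (fun q => ENNReal.ofReal δ⁻¹ * ENNReal.ofReal (exp (δ * h q ^ 2))) q
        + ENNReal.ofReal (1 + δ⁻¹) * ENNReal.ofReal (klFun (g q)) := by
    have hδinv : 0 ≤ δ⁻¹ := inv_nonneg.mpr hδ.le
    refine (ENNReal.ofReal_le_ofReal (mul_abs_sub_one_le hδ (hnn q) (hg q))).trans ?_
    rw [ENNReal.ofReal_add (by split_ifs <;> positivity)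
        (mul_nonneg (by positivity) (klFun_nonneg (hg q))),
      ENNReal.ofReal_add (sq_nonneg _) (by split_ifs <;> positivity),
      ENNReal.ofReal_mul (by positivity)]
    by_cases hq : 1 ≤ h q
    · rw [if_pos hq, Set.indicator_of_mem (s := {q | 1 ≤ h q}) hq, ENNReal.ofReal_mul hδinv]
    · rw [if_neg hq, Set.indicator_of_notMem (s := {q | 1 ≤ h q}) hq, ENNReal.ofReal_zero]
  refine (lintegral_mono hpt).trans_eq ?_
  rw [lintegral_add_left (hsq.fun_add (hexp.indicator hΓ)), lintegral_add_left hsq,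
    lintegral_indicator hΓ, lintegral_const_mul' _ _ ENNReal.ofReal_ne_top,
    lintegral_const_mul' _ _ ENNReal.ofReal_ne_top]

end Integrals

theorem stmt_1_general
    {𝕏 : Type*}
    [MeasurableSpace 𝕏]
    (νT : Measure (ℝ × 𝕏))
    (N : ℕ)
    (h : ℝ × 𝕏 → ℝ) (hm : Measurable h) (hnn : ∀ q, 0 ≤ h q)
    (hH2 : ∃ δ : ℝ, 0 < δ ∧ ∀ Γ : Set (ℝ × 𝕏), MeasurableSet Γ → νT Γ < ⊤ →
        ∫⁻ q in Γ, ENNReal.ofReal (Real.exp (δ * h q ^ (2 : ℝ))) ∂νT < ⊤)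
    (hint : ∫⁻ q, ENNReal.ofReal (h q ^ 2) ∂νT < ⊤) :
    (⨆ g ∈ {g : ℝ × 𝕏 → ℝ | Measurable g ∧ (∀ q, 0 ≤ g q) ∧
        ∫⁻ q, ENNReal.ofReal (g q * Real.log (g q) - g q + 1) ∂νT ≤ (N : ℝ≥0∞)},
      ∫⁻ q, ENNReal.ofReal (h q * |g q - 1|) ∂νT) < ⊤ := by
  obtain ⟨δ, hδ, hexp⟩ := hH2
  have hΓ := measure_one_le_lt_top_of_lintegral_sq_lt_top hm hint
  have hexpΓ := hexp _ (measurableSet_le measurable_const hm) hΓ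
  simp only [rpow_two] at hexpΓ
  have hbound : ∫⁻ q, ENNReal.ofReal (h q ^ 2) ∂νT
      + ENNReal.ofReal δ⁻¹ * ∫⁻ q in {q | 1 ≤ h q}, ENNReal.ofReal (exp (δ * h q ^ 2)) ∂νT
      + ENNReal.ofReal (1 + δ⁻¹) * N < ⊤ := by finiteness
  refine lt_of_le_of_lt (iSup₂_le fun g ⟨_, hg, hkl⟩ => ?_) hbound
  refine (lintegral_mul_abs_sub_one_le hm hnn hg hδ).trans ?_
  gcongr
  simpa only [klFun_apply, add_sub_right_comm] using hkl

theorem stmt_1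
    {𝕏 : Type*} [TopologicalSpace 𝕏] [PolishSpace 𝕏] [LocallyCompactSpace 𝕏]
    [MeasurableSpace 𝕏] [BorelSpace 𝕏]
    (T : ℝ) (hT : 0 < T)
    (ν : Measure 𝕏) [SigmaFinite ν] (hνK : ∀ Kc : Set 𝕏, IsCompact Kc → ν Kc < ⊤)
    (νT : Measure (ℝ × 𝕏)) (hνT : νT = (volume.restrict (Set.Icc 0 T)).prod ν)
    (N : ℕ)
    (h : ℝ × 𝕏 → ℝ) (hm : Measurable h) (hnn : ∀ q, 0 ≤ h q)
    (hH2 : ∃ δ : ℝ, 0 < δ ∧ ∀ Γ : Set (ℝ × 𝕏), MeasurableSet Γ → νT Γ < ⊤ →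
        ∫⁻ q in Γ, ENNReal.ofReal (Real.exp (δ * h q ^ (2 : ℝ))) ∂νT < ⊤)
    (hint : ∫⁻ q, ENNReal.ofReal (h q ^ 2) ∂νT < ⊤) :
    (⨆ g ∈ {g : ℝ × 𝕏 → ℝ | Measurable g ∧ (∀ q, 0 ≤ g q) ∧
        ∫⁻ q, ENNReal.ofReal (g q * Real.log (g q) - g q + 1) ∂νT ≤ (N : ℝ≥0∞)},
      ∫⁻ q, ENNReal.ofReal (h q * |g q - 1|) ∂νT) < ⊤ :=
  stmt_1_general νT N h hm hnn hH2 hint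
end

section
/- Let h:𝕏_T→ℝ be measurable with ∫_{𝕏_T}|h(s,x)|² ν_T(ds,dx)<∞, and suppose that for every δ>0 and every measurable E⊆𝕏_T with ν_T(E)<∞ one has ∫_E exp(δ|h(s,x)|) ν_T(ds,dx)<∞. Fix N∈ℕ, and let g_n,g∈S^N be such that ∫_{𝕏_T} φ(s,x)·g_n(s,x) ν_T(ds,dx) → ∫_{𝕏_T} φ(s,x)·g(s,x) ν_T(ds,dx) as n→∞ for every continuous compactly supported φ:𝕏_T→ℝ. Then lim_{n→∞} ∫_{𝕏_T} h(s,x)·(g_n(s,x)−1) ν_T(ds,dx) = ∫_{𝕏_T} h(s,x)·(g(s,x)−1) ν_T(ds,dx). -/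
/-!
Young's inequality for the conjugate pair `x log x - x + 1` and `exp s - s - 1` bounds, for every
function `f`, every `g` with entropy at most `N` and every `δ > 0`,
`∫ |f| |g - 1| ≤ δ⁻¹ (∫ (exp (δ |f|) - δ |f| - 1) + N)`.
Choosing `δ` with `N ≤ δ ε`, this is at most `2 ε` uniformly in `g` as soon as
`∫ (exp (δ |f|) - δ |f| - 1) ≤ δ ε`. The integrability assumptions on `h` give this for `h`
restricted to where `|h|` is very small or very large. The remaining part of `h` is bounded and
lives on a set of finite measure, so it is `L¹`-close to a bounded continuous compactly supported
`φ`, and the bounded difference again has a small exponential integral. Hence `∫ h (g - 1)` is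
uniformly approximated by `∫ φ g - ∫ φ`, which converges by assumption.
-/

open MeasureTheory Real Filter Topology Set InformationTheory
open scoped ENNReal

theorem mul_log_sub_add_one_nonneg {x : ℝ} (hx : 0 ≤ x) : 0 ≤ x * log x - x + 1 := by
  linarith [klFun_nonneg hx, klFun_apply x]

theorem mul_sub_one_le_exp_sub_add_mul_log (t : ℝ) {x : ℝ} (hx : 0 ≤ x) :
    t * (x - 1) ≤ (exp t - t - 1) + (x * log x - x + 1) := by
  rcases hx.eq_or_lt with rfl | hx
  · simp only [zero_mul, zero_sub, mul_neg, mul_one]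
    linarith [exp_pos t]
  · have h := add_one_le_exp (t - log x)
    rw [exp_sub, exp_log hx, le_div_iff₀ hx] at h
    nlinarith

theorem mul_abs_sub_one_le_exp_sub_add_mul_log {s x : ℝ} (hs : 0 ≤ s) (hx : 0 ≤ x) :
    s * |x - 1| ≤ (exp s - s - 1) + (x * log x - x + 1) := by
  rcases le_total 0 (x - 1) with h | h
  · rw [abs_of_nonneg h]
    exact mul_sub_one_le_exp_sub_add_mul_log s hx
  · have hsinh : exp (-s) + s ≤ exp s - s := by
      linarith [self_le_sinh_iff.mpr hs, sinh_eq s]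
    rw [abs_of_nonpos h]
    linarith [mul_sub_one_le_exp_sub_add_mul_log (-s) hx]

theorem exp_sub_sub_one_nonneg (s : ℝ) : 0 ≤ exp s - s - 1 := by
  linarith [add_one_le_exp s]

theorem exp_sub_sub_one_le_sq {s : ℝ} (hs : |s| ≤ 1) : exp s - s - 1 ≤ s ^ 2 := by
  linarith [(abs_le.mp (abs_exp_sub_one_sub_id_le hs)).2]

theorem exp_sub_sub_one_le_mul_exp {s : ℝ} (hs : 0 ≤ s) : exp s - s - 1 ≤ s * exp s := by
  have h := mul_le_mul_of_nonneg_right (add_one_le_exp (-s)) (exp_pos s).le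
  rw [← exp_add, neg_add_cancel, exp_zero] at h
  linarith

theorem ENNReal.exists_pos_le_ofReal_mul {N : ℝ≥0∞} (hN : N ≠ ⊤) {ε : ℝ} (hε : 0 < ε) :
    ∃ δ : ℝ, 0 < δ ∧ N ≤ ENNReal.ofReal (δ * ε) := by
  refine ⟨(N.toReal + 1) / ε, by positivity, ?_⟩
  rw [div_mul_cancel₀ _ hε.ne', ENNReal.ofReal_add ENNReal.toReal_nonneg zero_le_one,
    ENNReal.ofReal_toReal hN]
  exact le_self_add

theorem abs_indicator_abs_mem_Ioc_le {α : Type*} (f : α → ℝ) {η : ℝ} (hη : 0 ≤ η) (q : α) :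
    |{q | |f q| ∈ Ioc η η⁻¹}.indicator f q| ≤ η⁻¹ := by
  by_cases hq : q ∈ {q | |f q| ∈ Ioc η η⁻¹}
  · rw [indicator_of_mem hq]
    exact hq.2
  · rw [indicator_of_notMem hq, abs_zero]
    positivity

/-- The sublevel set `S^N` of the entropy functional, for an arbitrary measure. -/
def entropyBall {α : Type*} [MeasurableSpace α] (μ : Measure α) (N : ℝ≥0∞) : Set (α → ℝ) :=
  {g | Measurable g ∧ (∀ q, 0 ≤ g q) ∧ ∫⁻ q, ENNReal.ofReal (g q * log (g q) - g q + 1) ∂μ ≤ N}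

section
variable {α : Type*} [MeasurableSpace α] {μ : Measure α}

theorem lintegral_abs_mul_abs_sub_one_le {f g : α → ℝ} {N : ℝ≥0∞} (hf : Measurable f)
    (hg : g ∈ entropyBall μ N) {δ : ℝ} (hδ : 0 < δ) :
    ∫⁻ q, ENNReal.ofReal (|f q| * |g q - 1|) ∂μ ≤
      ENNReal.ofReal δ⁻¹ * (∫⁻ q, ENNReal.ofReal (exp (δ * |f q|) - δ * |f q| - 1) ∂μ + N) := by
  obtain ⟨-, hg0, hgN⟩ := hg
  calc ∫⁻ q, ENNReal.ofReal (|f q| * |g q - 1|) ∂μ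
      ≤ ∫⁻ q, ENNReal.ofReal δ⁻¹ * (ENNReal.ofReal (exp (δ * |f q|) - δ * |f q| - 1)
          + ENNReal.ofReal (g q * log (g q) - g q + 1)) ∂μ := by
        refine lintegral_mono fun q => ?_
        rw [← ENNReal.ofReal_add (exp_sub_sub_one_nonneg _) (mul_log_sub_add_one_nonneg (hg0 q)),
          ← ENNReal.ofReal_mul (inv_nonneg.2 hδ.le)]
        refine ENNReal.ofReal_le_ofReal ?_
        rw [← div_eq_inv_mul, le_div_iff₀ hδ]
        nlinarith [mul_abs_sub_one_le_exp_sub_add_mul_log (by positivity : 0 ≤ δ * |f q|) (hg0 q)]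
    _ = ENNReal.ofReal δ⁻¹ * (∫⁻ q, ENNReal.ofReal (exp (δ * |f q|) - δ * |f q| - 1) ∂μ
          + ∫⁻ q, ENNReal.ofReal (g q * log (g q) - g q + 1) ∂μ) := by
        rw [lintegral_const_mul' _ _ ENNReal.ofReal_ne_top, lintegral_add_left (by fun_prop)]
    _ ≤ _ := by gcongr

theorem lintegral_abs_mul_abs_sub_one_le_two_mul {f g : α → ℝ} {N : ℝ≥0∞} (hf : Measurable f)
    (hg : g ∈ entropyBall μ N) {δ ε : ℝ} (hδ : 0 < δ) (hε : 0 ≤ ε)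
    (hN : N ≤ ENNReal.ofReal (δ * ε))
    (hf_exp : ∫⁻ q, ENNReal.ofReal (exp (δ * |f q|) - δ * |f q| - 1) ∂μ ≤ ENNReal.ofReal (δ * ε)) :
    ∫⁻ q, ENNReal.ofReal (|f q| * |g q - 1|) ∂μ ≤ ENNReal.ofReal (2 * ε) :=
  calc _ ≤ ENNReal.ofReal δ⁻¹ * (ENNReal.ofReal (δ * ε) + ENNReal.ofReal (δ * ε)) :=
        (lintegral_abs_mul_abs_sub_one_le hf hg hδ).trans (by gcongr)
    _ = ENNReal.ofReal (2 * ε) := by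
        rw [← ENNReal.ofReal_add (by positivity) (by positivity),
          ← ENNReal.ofReal_mul (by positivity)]
        congr 1
        field_simp
        ring

theorem lintegral_exp_sub_le_of_abs_le {ψ : α → ℝ} {δ C ε : ℝ} (hδ : 0 ≤ δ)
    (hψC : ∀ q, |ψ q| ≤ C)
    (hψ : ∫⁻ q, ENNReal.ofReal |ψ q| ∂μ ≤ ENNReal.ofReal (ε * exp (-(δ * C)))) :
    ∫⁻ q, ENNReal.ofReal (exp (δ * |ψ q|) - δ * |ψ q| - 1) ∂μ ≤ ENNReal.ofReal (δ * ε) := by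
  have hpt (q : α) : exp (δ * |ψ q|) - δ * |ψ q| - 1 ≤ δ * exp (δ * C) * |ψ q| := by
    have : exp (δ * |ψ q|) ≤ exp (δ * C) := exp_le_exp.mpr (by gcongr; exact hψC q)
    calc exp (δ * |ψ q|) - δ * |ψ q| - 1 ≤ δ * |ψ q| * exp (δ * |ψ q|) :=
          exp_sub_sub_one_le_mul_exp (by positivity)
      _ ≤ δ * |ψ q| * exp (δ * C) := by gcongr
      _ = δ * exp (δ * C) * |ψ q| := by ring
  calc _ ≤ ∫⁻ q, ENNReal.ofReal (δ * exp (δ * C)) * ENNReal.ofReal |ψ q| ∂μ :=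
        lintegral_mono fun q => by
          rw [← ENNReal.ofReal_mul (by positivity)]
          exact ENNReal.ofReal_le_ofReal (hpt q)
    _ ≤ ENNReal.ofReal (δ * exp (δ * C)) * ENNReal.ofReal (ε * exp (-(δ * C))) := by
        rw [lintegral_const_mul' _ _ ENNReal.ofReal_ne_top]
        gcongr
    _ = ENNReal.ofReal (δ * ε) := by
        rw [← ENNReal.ofReal_mul (by positivity), mul_mul_mul_comm, ← exp_add, add_neg_cancel,
          exp_zero, mul_one]

theorem lintegral_abs_add_mul_abs_le {f₁ f₂ w : α → ℝ} (hf₁ : Measurable f₁) (hw : Measurable w) :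
    ∫⁻ q, ENNReal.ofReal (|f₁ q + f₂ q| * |w q|) ∂μ ≤
      ∫⁻ q, ENNReal.ofReal (|f₁ q| * |w q|) ∂μ + ∫⁻ q, ENNReal.ofReal (|f₂ q| * |w q|) ∂μ := by
  rw [← lintegral_add_left (by fun_prop)]
  refine lintegral_mono fun q => ?_
  rw [← ENNReal.ofReal_add (by positivity) (by positivity), ← add_mul]
  exact ENNReal.ofReal_le_ofReal (mul_le_mul_of_nonneg_right (abs_add_le _ _) (abs_nonneg _))

theorem measure_lt_abs_lt_top {f : α → ℝ} (hf : Measurable f)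
    (hL2 : ∫⁻ q, ENNReal.ofReal (|f q| ^ 2) ∂μ < ⊤) {η : ℝ} (hη : 0 < η) :
    μ {q | η < |f q|} < ⊤ := by
  have hsub : {q | η < |f q|} ⊆ {q | ENNReal.ofReal (η ^ 2) ≤ ENNReal.ofReal (|f q| ^ 2)} :=
    fun q hq => ENNReal.ofReal_le_ofReal (pow_le_pow_left₀ hη.le (le_of_lt hq) 2)
  have hη2 : ENNReal.ofReal (η ^ 2) ≠ 0 := (ENNReal.ofReal_pos.2 (by positivity)).ne'
  exact (measure_mono hsub).trans_lt <|
    (meas_ge_le_lintegral_div (by fun_prop) hη2 ENNReal.ofReal_ne_top).trans_lt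
      (ENNReal.div_lt_top hL2.ne hη2)

theorem lintegral_exp_sub_lt_top {f : α → ℝ} (hf : Measurable f)
    (hL2 : ∫⁻ q, ENNReal.ofReal (|f q| ^ 2) ∂μ < ⊤)
    (hexp : ∀ δ : ℝ, 0 < δ → ∀ E : Set α, MeasurableSet E → μ E < ⊤ →
      ∫⁻ q in E, ENNReal.ofReal (exp (δ * |f q|)) ∂μ < ⊤) {δ : ℝ} (hδ : 0 < δ) :
    ∫⁻ q, ENNReal.ofReal (exp (δ * |f q|) - δ * |f q| - 1) ∂μ < ⊤ := by
  set E := {q | δ⁻¹ < |f q|}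
  have hE : MeasurableSet E := measurableSet_lt measurable_const hf.abs
  rw [← lintegral_add_compl _ hE]
  refine ENNReal.add_lt_top.mpr ⟨?_, ?_⟩
  · refine lt_of_le_of_lt (setLIntegral_mono (by fun_prop) fun q _ => ?_)
      (hexp δ hδ E hE (measure_lt_abs_lt_top hf hL2 (inv_pos.2 hδ)))
    exact ENNReal.ofReal_le_ofReal (by linarith [mul_nonneg hδ.le (abs_nonneg (f q))])
  · calc ∫⁻ q in Eᶜ, ENNReal.ofReal (exp (δ * |f q|) - δ * |f q| - 1) ∂μ
        ≤ ∫⁻ q in Eᶜ, ENNReal.ofReal (δ ^ 2) * ENNReal.ofReal (|f q| ^ 2) ∂μ := by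
          refine setLIntegral_mono (by fun_prop) fun q hq => ?_
          have hq : δ * |f q| ≤ 1 := by
            calc δ * |f q| ≤ δ * δ⁻¹ := by gcongr; exact not_lt.mp hq
              _ = 1 := mul_inv_cancel₀ hδ.ne'
          rw [← ENNReal.ofReal_mul (by positivity), ← mul_pow]
          refine ENNReal.ofReal_le_ofReal (exp_sub_sub_one_le_sq ?_)
          rwa [abs_of_nonneg (by positivity)]
      _ ≤ ENNReal.ofReal (δ ^ 2) * ∫⁻ q, ENNReal.ofReal (|f q| ^ 2) ∂μ := by
          rw [lintegral_const_mul' _ _ ENNReal.ofReal_ne_top]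
          gcongr
          exact Measure.restrict_le_self
      _ < ⊤ := ENNReal.mul_lt_top ENNReal.ofReal_lt_top hL2

theorem tendsto_setLIntegral_compl_abs_mem_Ioc {f : α → ℝ} {u : α → ℝ≥0∞} (hf : Measurable f)
    (hu : Measurable u) (hu_fin : ∫⁻ q, u q ∂μ ≠ ⊤) (hu_zero : ∀ q, f q = 0 → u q = 0) :
    Tendsto (fun η => ∫⁻ q in {q | |f q| ∈ Ioc η η⁻¹}ᶜ, u q ∂μ) (𝓝[>] 0) (𝓝 0) := by
  have hA : ∀ η, MeasurableSet {q | |f q| ∈ Ioc η η⁻¹} := fun η => hf.abs measurableSet_Ioc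
  simp_rw [← lintegral_indicator (hA _).compl]
  rw [← lintegral_zero]
  refine tendsto_lintegral_filter_of_dominated_convergence u
    (Eventually.of_forall fun η => hu.indicator (hA η).compl)
    (Eventually.of_forall fun η => ae_of_all _ (indicator_le_self _ _)) hu_fin
    (ae_of_all _ fun q => ?_)
  by_cases hq : f q = 0
  · simp [indicator_apply, hu_zero q hq]
  · have hq_pos : 0 < |f q| := abs_pos.2 hq
    refine tendsto_const_nhds.congr' ?_
    filter_upwards [Ioo_mem_nhdsGT (lt_min hq_pos (inv_pos.2 hq_pos))] with η hη
    refine (indicator_of_notMem (not_not.2 ⟨hη.2.trans_le (min_le_left _ _), ?_⟩) _).symm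
    exact ((lt_inv_comm₀ hη.1 hq_pos).1 (hη.2.trans_le (min_le_right _ _))).le

theorem exists_lintegral_exp_sub_indicator_compl_le {f : α → ℝ} (hf : Measurable f)
    (hL2 : ∫⁻ q, ENNReal.ofReal (|f q| ^ 2) ∂μ < ⊤)
    (hexp : ∀ δ : ℝ, 0 < δ → ∀ E : Set α, MeasurableSet E → μ E < ⊤ →
      ∫⁻ q in E, ENNReal.ofReal (exp (δ * |f q|)) ∂μ < ⊤) {δ : ℝ} (hδ : 0 < δ)
    {c : ℝ≥0∞} (hc : 0 < c) :
    ∃ η > 0, ∫⁻ q, ENNReal.ofReal (exp (δ * |{q | |f q| ∈ Ioc η η⁻¹}ᶜ.indicator f q|)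
      - δ * |{q | |f q| ∈ Ioc η η⁻¹}ᶜ.indicator f q| - 1) ∂μ ≤ c := by
  have htail := tendsto_setLIntegral_compl_abs_mem_Ioc hf (by fun_prop)
    (lintegral_exp_sub_lt_top hf hL2 hexp hδ).ne (fun q hq => by simp [hq])
  obtain ⟨η, hη, hη_pos⟩ := ((htail.eventually (ge_mem_nhds hc)).and self_mem_nhdsWithin).exists
  refine ⟨η, hη_pos, le_of_eq_of_le ?_ hη⟩
  have hA : MeasurableSet {q | |f q| ∈ Ioc η η⁻¹} := hf.abs measurableSet_Ioc
  rw [← lintegral_indicator hA.compl]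
  congr 1 with q
  by_cases hq : q ∈ {q | |f q| ∈ Ioc η η⁻¹}ᶜ
  · rw [indicator_of_mem hq, indicator_of_mem hq]
  · rw [indicator_of_notMem hq, indicator_of_notMem hq]
    simp

theorem integrable_indicator_abs_mem_Ioc {f : α → ℝ} (hf : Measurable f)
    (hL2 : ∫⁻ q, ENNReal.ofReal (|f q| ^ 2) ∂μ < ⊤) {η : ℝ} (hη : 0 < η) :
    Integrable ({q | |f q| ∈ Ioc η η⁻¹}.indicator f) μ := by
  have hA : MeasurableSet {q | |f q| ∈ Ioc η η⁻¹} := hf.abs measurableSet_Ioc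
  rw [integrable_indicator_iff hA]
  refine Measure.integrableOn_of_bounded ?_ hf.aestronglyMeasurable (M := η⁻¹) ?_
  · exact ((measure_mono fun q hq => hq.1).trans_lt (measure_lt_abs_lt_top hf hL2 hη)).ne
  · exact (ae_restrict_iff' hA).2 (ae_of_all _ fun q hq => hq.2)

theorem integrable_mul_sub_one {f g : α → ℝ} {N : ℝ≥0∞} (hf : Measurable f)
    (hg : g ∈ entropyBall μ N) (hN : N ≠ ⊤) {δ : ℝ} (hδ : 0 < δ)
    (hf_exp : ∫⁻ q, ENNReal.ofReal (exp (δ * |f q|) - δ * |f q| - 1) ∂μ < ⊤) :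
    Integrable (fun q => f q * (g q - 1)) μ := by
  refine ⟨(hf.mul (hg.1.sub measurable_const)).aestronglyMeasurable, ?_⟩
  rw [hasFiniteIntegral_iff_norm]
  simp only [Real.norm_eq_abs, abs_mul]
  exact (lintegral_abs_mul_abs_sub_one_le hf hg hδ).trans_lt
    (ENNReal.mul_lt_top ENNReal.ofReal_lt_top (ENNReal.add_lt_top.2 ⟨hf_exp, hN.lt_top⟩))

theorem abs_integral_mul_sub_one_sub_le {f φ g : α → ℝ}
    (hfg : Integrable (fun q => f q * (g q - 1)) μ) (hφ : Integrable φ μ)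
    (hg : AEStronglyMeasurable g μ) {ε : ℝ} (hε : 0 ≤ ε)
    (hclose : ∫⁻ q, ENNReal.ofReal (|f q - φ q| * |g q - 1|) ∂μ ≤ ENNReal.ofReal ε) :
    |∫ q, f q * (g q - 1) ∂μ - (∫ q, φ q * g q ∂μ - ∫ q, φ q ∂μ)| ≤ ε := by
  have hφg_meas : AEStronglyMeasurable (fun q => φ q * (g q - 1)) μ :=
    hφ.aestronglyMeasurable.mul (hg.sub aestronglyMeasurable_const)
  have hdiff : Integrable (fun q => (f q - φ q) * (g q - 1)) μ := by
    refine ⟨(hfg.aestronglyMeasurable.sub hφg_meas).congr (ae_of_all _ fun q => by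
      simp only [Pi.sub_apply]; ring), ?_⟩
    rw [hasFiniteIntegral_iff_norm]
    simpa only [Real.norm_eq_abs, abs_mul] using hclose.trans_lt ENNReal.ofReal_lt_top
  have hφg : Integrable (fun q => φ q * g q) μ :=
    ((hfg.sub hdiff).add hφ).congr (ae_of_all _ fun q => by
      simp only [Pi.sub_apply, Pi.add_apply]; ring)
  have hφg_sub : Integrable (fun q => φ q * g q - φ q) μ := hφg.sub hφ
  rw [← integral_sub hφg hφ, ← integral_sub hfg hφg_sub]
  calc |∫ q, f q * (g q - 1) - (φ q * g q - φ q) ∂μ|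
      = ‖∫ q, (f q - φ q) * (g q - 1) ∂μ‖ := by
        rw [Real.norm_eq_abs]
        congr 2 with q
        ring
    _ ≤ ε := by
        refine (norm_integral_le_lintegral_norm _).trans (ENNReal.toReal_le_of_le_ofReal hε ?_)
        simpa only [Real.norm_eq_abs, abs_mul] using hclose

end

theorem tendsto_of_forall_approx {ι E : Type*} [PseudoMetricSpace E] {l : Filter ι} {u : ι → E}
    {a : E} (h : ∀ ε > 0, ∃ v : ι → E, ∃ b, Tendsto v l (𝓝 b) ∧ (∀ i, dist (u i) (v i) ≤ ε) ∧
      dist a b ≤ ε) :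
    Tendsto u l (𝓝 a) := by
  refine Metric.tendsto_nhds.2 fun ε hε => ?_
  obtain ⟨v, b, hv, huv, hab⟩ := h (ε / 4) (by positivity)
  filter_upwards [Metric.tendsto_nhds.1 hv (ε / 4) (by positivity)] with i hi
  calc dist (u i) a ≤ dist (u i) (v i) + dist (v i) b + dist b a := dist_triangle4 _ _ _ _
    _ < ε := by linarith [huv i, dist_comm a b]

section Approximation

variable {α : Type*} [TopologicalSpace α] [NormalSpace α] [R1Space α] [WeaklyLocallyCompactSpace α]
  [MeasurableSpace α] [BorelSpace α] {μ : Measure α} [μ.Regular]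

theorem exists_continuous_abs_le_lintegral_abs_sub_le {u : α → ℝ} (hu : Integrable u μ) {C : ℝ}
    (hC : 0 ≤ C) (huC : ∀ q, |u q| ≤ C) {ε : ℝ≥0∞} (hε : ε ≠ 0) :
    ∃ φ : α → ℝ, Continuous φ ∧ HasCompactSupport φ ∧ (∀ q, |φ q| ≤ C) ∧
      ∫⁻ q, ENNReal.ofReal |u q - φ q| ∂μ ≤ ε := by
  obtain ⟨φ₀, hφ₀_supp, hφ₀_close, hφ₀_cont, -⟩ := hu.exists_hasCompactSupport_lintegral_sub_le hε
  set clamp : ℝ → ℝ := fun x => max (min x C) (-C)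
  have hclamp_abs (x : ℝ) : |clamp x| ≤ C :=
    abs_le.2 ⟨le_max_right _ _, max_le (min_le_right _ _) (by linarith)⟩
  have hclamp_sub (q : α) (x : ℝ) : |u q - clamp x| ≤ |u q - x| := by
    have hu_fix : clamp (u q) = u q := by
      obtain ⟨h₁, h₂⟩ := abs_le.1 (huC q)
      simp only [clamp, min_eq_left h₂, max_eq_left h₁]
    calc |u q - clamp x| = |clamp (u q) - clamp x| := by rw [hu_fix]
      _ ≤ |min (u q) C - min x C| := abs_max_sub_max_le_abs _ _ _
      _ ≤ max |u q - x| |C - C| := abs_min_sub_min_le_max _ _ _ _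
      _ = |u q - x| := by simp
  refine ⟨clamp ∘ φ₀, by fun_prop, hφ₀_supp.comp_left (by simp [clamp, hC]),
    fun q => hclamp_abs _, ?_⟩
  refine (lintegral_mono fun q => ENNReal.ofReal_le_ofReal (hclamp_sub q (φ₀ q))).trans ?_
  simpa only [Real.enorm_eq_ofReal_abs] using hφ₀_close

theorem exists_continuous_lintegral_abs_sub_mul_abs_sub_one_le {f : α → ℝ} (hf : Measurable f)
    (hL2 : ∫⁻ q, ENNReal.ofReal (|f q| ^ 2) ∂μ < ⊤)
    (hexp : ∀ δ : ℝ, 0 < δ → ∀ E : Set α, MeasurableSet E → μ E < ⊤ →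
      ∫⁻ q in E, ENNReal.ofReal (exp (δ * |f q|)) ∂μ < ⊤) {N : ℝ≥0∞} (hN : N ≠ ⊤)
    {ε : ℝ} (hε : 0 < ε) :
    ∃ φ : α → ℝ, Continuous φ ∧ HasCompactSupport φ ∧ ∀ g ∈ entropyBall μ N,
      ∫⁻ q, ENNReal.ofReal (|f q - φ q| * |g q - 1|) ∂μ ≤ ENNReal.ofReal ε := by
  set ε' := ε / 4
  have hε' : 0 < ε' := by positivity
  obtain ⟨δ, hδ, hNδ⟩ := ENNReal.exists_pos_le_ofReal_mul hN hε'
  obtain ⟨η, hη, h_tail⟩ := exists_lintegral_exp_sub_indicator_compl_le hf hL2 hexp hδ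
    (ENNReal.ofReal_pos.2 (mul_pos hδ hε'))
  set A := {q | |f q| ∈ Ioc η η⁻¹}
  have hA : MeasurableSet A := hf.abs measurableSet_Ioc
  have h_mid_le := abs_indicator_abs_mem_Ioc_le f hη.le
  -- the factor `exp (-(δ * (2 * η⁻¹)))` absorbs the growth of `exp` on the bounded difference
  obtain ⟨φ, hφ_cont, hφ_supp, hφ_le, hφ_close⟩ :=
    exists_continuous_abs_le_lintegral_abs_sub_le (integrable_indicator_abs_mem_Ioc hf hL2 hη)
      (inv_nonneg.2 hη.le) h_mid_le (ε := ENNReal.ofReal (ε' * exp (-(δ * (2 * η⁻¹)))))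
      (ENNReal.ofReal_pos.2 (by positivity)).ne'
  refine ⟨φ, hφ_cont, hφ_supp, fun g hg => ?_⟩
  have h_tail' := lintegral_abs_mul_abs_sub_one_le_two_mul (hf.indicator hA.compl) hg hδ hε'.le
    hNδ h_tail
  have h_mid : ∫⁻ q, ENNReal.ofReal (|A.indicator f q - φ q| * |g q - 1|) ∂μ ≤
      ENNReal.ofReal (2 * ε') :=
    lintegral_abs_mul_abs_sub_one_le_two_mul (f := fun q => A.indicator f q - φ q)
      ((hf.indicator hA).sub hφ_cont.measurable) hg hδ hε'.le hNδ
      (lintegral_exp_sub_le_of_abs_le hδ.le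
        (fun q => by linarith [abs_sub (A.indicator f q) (φ q), h_mid_le q, hφ_le q]) hφ_close)
  have h_split (q : α) : f q - φ q = Aᶜ.indicator f q + (A.indicator f q - φ q) := by
    rw [← add_sub_assoc, ← Pi.add_apply, indicator_compl_add_self]
  calc ∫⁻ q, ENNReal.ofReal (|f q - φ q| * |g q - 1|) ∂μ
      ≤ ENNReal.ofReal (2 * ε') + ENNReal.ofReal (2 * ε') := by
        simp_rw [h_split]
        exact (lintegral_abs_add_mul_abs_le (hf.indicator hA.compl)
          (hg.1.sub measurable_const)).trans (add_le_add h_tail' h_mid)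
    _ = ENNReal.ofReal ε := by
        rw [← ENNReal.ofReal_add (by positivity) (by positivity)]
        congr 1
        ring

end Approximation

theorem stmt_2_general
    {𝕏 : Type*} [TopologicalSpace 𝕏] [PolishSpace 𝕏] [LocallyCompactSpace 𝕏]
    [MeasurableSpace 𝕏] [BorelSpace 𝕏]
    (T : ℝ)
    (ν : Measure 𝕏) (hνK : ∀ Kc : Set 𝕏, IsCompact Kc → ν Kc < ⊤)
    (νT : Measure (ℝ × 𝕏)) (hνT : νT = (volume.restrict (Set.Icc 0 T)).prod ν)
    (h : ℝ × 𝕏 → ℝ) (hm : Measurable h)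
    (hL2 : ∫⁻ q, ENNReal.ofReal (|h q| ^ 2) ∂νT < ⊤)
    (hexp : ∀ δ : ℝ, 0 < δ → ∀ E : Set (ℝ × 𝕏), MeasurableSet E → νT E < ⊤ →
        ∫⁻ q in E, ENNReal.ofReal (Real.exp (δ * |h q|)) ∂νT < ⊤)
    (N : ℕ) (gn : ℕ → ℝ × 𝕏 → ℝ) (g : ℝ × 𝕏 → ℝ)
    (hgn : ∀ n, gn n ∈ {g : ℝ × 𝕏 → ℝ | Measurable g ∧ (∀ q, 0 ≤ g q) ∧
        ∫⁻ q, ENNReal.ofReal (g q * Real.log (g q) - g q + 1) ∂νT ≤ (N : ℝ≥0∞)})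
    (hg : g ∈ {g : ℝ × 𝕏 → ℝ | Measurable g ∧ (∀ q, 0 ≤ g q) ∧
        ∫⁻ q, ENNReal.ofReal (g q * Real.log (g q) - g q + 1) ∂νT ≤ (N : ℝ≥0∞)})
    (hconv : ∀ φ : ℝ × 𝕏 → ℝ, Continuous φ → HasCompactSupport φ →
        Tendsto (fun n => ∫ q, φ q * gn n q ∂νT) atTop (nhds (∫ q, φ q * g q ∂νT))) :
    Tendsto (fun n => ∫ q, h q * (gn n q - 1) ∂νT) atTop
      (nhds (∫ q, h q * (g q - 1) ∂νT)) := by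
  have : IsFiniteMeasureOnCompacts ν := ⟨hνK⟩
  have : IsFiniteMeasureOnCompacts νT := hνT ▸ inferInstance
  refine tendsto_of_forall_approx fun ε hε => ?_
  obtain ⟨φ, hφ_cont, hφ_supp, hφ_close⟩ :=
    exists_continuous_lintegral_abs_sub_mul_abs_sub_one_le hm hL2 hexp
      (ENNReal.natCast_ne_top N) hε
  have hφ : Integrable φ νT := hφ_cont.integrable_of_hasCompactSupport hφ_supp
  have h_approx (G) (hG : G ∈ entropyBall νT N) :
      dist (∫ q, h q * (G q - 1) ∂νT) (∫ q, φ q * G q ∂νT - ∫ q, φ q ∂νT) ≤ ε :=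
    abs_integral_mul_sub_one_sub_le (integrable_mul_sub_one hm hG (ENNReal.natCast_ne_top N)
      one_pos (lintegral_exp_sub_lt_top hm hL2 hexp one_pos)) hφ hG.1.aestronglyMeasurable
      hε.le (hφ_close G hG)
  exact ⟨_, _, (hconv φ hφ_cont hφ_supp).sub_const _, fun n => h_approx _ (hgn n),
    h_approx _ hg⟩

theorem stmt_2
    {𝕏 : Type*} [TopologicalSpace 𝕏] [PolishSpace 𝕏] [LocallyCompactSpace 𝕏]
    [MeasurableSpace 𝕏] [BorelSpace 𝕏]
    (T : ℝ) (hT : 0 < T)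
    (ν : Measure 𝕏) [SigmaFinite ν] (hνK : ∀ Kc : Set 𝕏, IsCompact Kc → ν Kc < ⊤)
    (νT : Measure (ℝ × 𝕏)) (hνT : νT = (volume.restrict (Set.Icc 0 T)).prod ν)
    (h : ℝ × 𝕏 → ℝ) (hm : Measurable h)
    (hL2 : ∫⁻ q, ENNReal.ofReal (|h q| ^ 2) ∂νT < ⊤)
    (hexp : ∀ δ : ℝ, 0 < δ → ∀ E : Set (ℝ × 𝕏), MeasurableSet E → νT E < ⊤ →
        ∫⁻ q in E, ENNReal.ofReal (Real.exp (δ * |h q|)) ∂νT < ⊤)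
    (N : ℕ) (gn : ℕ → ℝ × 𝕏 → ℝ) (g : ℝ × 𝕏 → ℝ)
    (hgn : ∀ n, gn n ∈ {g : ℝ × 𝕏 → ℝ | Measurable g ∧ (∀ q, 0 ≤ g q) ∧
        ∫⁻ q, ENNReal.ofReal (g q * Real.log (g q) - g q + 1) ∂νT ≤ (N : ℝ≥0∞)})
    (hg : g ∈ {g : ℝ × 𝕏 → ℝ | Measurable g ∧ (∀ q, 0 ≤ g q) ∧
        ∫⁻ q, ENNReal.ofReal (g q * Real.log (g q) - g q + 1) ∂νT ≤ (N : ℝ≥0∞)})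
    (hconv : ∀ φ : ℝ × 𝕏 → ℝ, Continuous φ → HasCompactSupport φ →
        Tendsto (fun n => ∫ q, φ q * gn n q ∂νT) atTop (nhds (∫ q, φ q * g q ∂νT))) :
    Tendsto (fun n => ∫ q, h q * (gn n q - 1) ∂νT) atTop
      (nhds (∫ q, h q * (g q - 1) ∂νT)) :=
  stmt_2_general T ν hνK νT hνT h hm hL2 hexp N gn g hgn hg hconv
end

section
/- Let h:𝕏_T→ℝ be measurable with ∫_{𝕏_T}|h(s,x)|² ν_T(ds,dx)<∞, and suppose that for every δ>0 and every measurable E⊆𝕏_T with ν_T(E)<∞ one has ∫_E exp(δ|h(s,x)|) ν_T(ds,dx)<∞. Fix N∈ℕ. Then for every ε>0 there exists a compact set K_ε⊆𝕏 such that sup_{g∈S^N} ∫_0^T ∫_{𝕏∖K_ε} |h(s,x)|·|g(s,x)−1| ν(dx) ds ≤ ε. -/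
open MeasureTheory Real Filter
open scoped ENNReal

/-!
Put `σ = (N + 1) / ε` and `x = σ |h|`. Fenchel–Young duality between `eˣ - 1` and the entropy
function `l = klFun` gives, pointwise, `x |g - 1| ≤ x² + 1_{x > 1} eˣ + l(g)`. The first two terms
form a function `G` that does not depend on `g` and is `νT`-integrable: `x²` by the `L²`
hypothesis, and `eˣ` on `{x > 1}`, a set of finite measure by Chebyshev, by exponential
integrability. The finite measure `G · νT` pushed forward to the Polish space `𝕏` is tight, so
some compact `K` carries all of it but mass `1`; then `σ ∫_{Kᶜ} |h| |g - 1| ≤ 1 + N = σ ε`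
uniformly over `g ∈ S^N`.
-/

open Set InformationTheory

namespace Real

lemma mul_le_exp_sub_one_add_klFun (x : ℝ) {y : ℝ} (hy : 0 ≤ y) :
    x * y ≤ (exp x - 1) + klFun y := by
  rw [klFun_apply]
  rcases hy.eq_or_lt with rfl | hy
  · simpa using (exp_pos x).le
  · have h := mul_le_mul_of_nonneg_left (add_one_le_exp (x - log y)) hy.le
    rw [exp_sub, exp_log hy, mul_div_cancel₀ _ hy.ne'] at h
    linarith

lemma mul_abs_sub_one_le_exp_sub_add_klFun {x b : ℝ} (hx : 0 ≤ x) (hb : 0 ≤ b) :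
    x * |b - 1| ≤ (exp x - x - 1) + klFun b := by
  rcases le_total 1 b with h1b | hb1
  · rw [abs_of_nonneg (sub_nonneg.2 h1b)]
    linarith [mul_le_exp_sub_one_add_klFun x hb]
  · rw [abs_of_nonpos (sub_nonpos.2 hb1)]
    have hsinh : 2 * x ≤ exp x - exp (-x) := by
      linarith [self_le_sinh_iff.2 hx, sinh_eq x]
    linarith [mul_le_exp_sub_one_add_klFun (-x) hb]

lemma exp_sub_sub_one_le_sq_add_indicator {x : ℝ} (hx : 0 ≤ x) :
    exp x - x - 1 ≤ x ^ 2 + (Ioi 1).indicator exp x := by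
  by_cases h1x : 1 < x
  · rw [indicator_of_mem (mem_Ioi.2 h1x)]
    nlinarith
  · rw [indicator_of_notMem (by simpa using h1x), add_zero]
    have := abs_exp_sub_one_sub_id_le (x := x) (by rw [abs_of_nonneg hx]; linarith)
    linarith [le_abs_self (exp x - 1 - x)]

lemma mul_abs_sub_one_le_sq_add_indicator_exp_add_klFun {x b : ℝ} (hx : 0 ≤ x) (hb : 0 ≤ b) :
    x * |b - 1| ≤ x ^ 2 + (Ioi 1).indicator exp x + klFun b := by
  linarith [mul_abs_sub_one_le_exp_sub_add_klFun hx hb, exp_sub_sub_one_le_sq_add_indicator hx]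

lemma ofReal_mul_abs_mul_abs_sub_one_le {σ a b : ℝ} (hσ : 0 ≤ σ) (hb : 0 ≤ b) :
    ENNReal.ofReal σ * ENNReal.ofReal (|a| * |b - 1|)
      ≤ ENNReal.ofReal ((σ * |a|) ^ 2 + (Ioi 1).indicator exp (σ * |a|))
        + ENNReal.ofReal (b * log b - b + 1) := by
  rw [← ENNReal.ofReal_mul hσ, ← mul_assoc, ← ENNReal.ofReal_add
    (add_nonneg (sq_nonneg _) (indicator_nonneg (fun _ _ => (exp_pos _).le) _))
    (by linarith [klFun_apply b ▸ klFun_nonneg hb])]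
  refine ENNReal.ofReal_le_ofReal
    ((mul_abs_sub_one_le_sq_add_indicator_exp_add_klFun (by positivity) hb).trans_eq ?_)
  rw [klFun_apply]
  ring

end Real

section

variable {α : Type*} [MeasurableSpace α]

lemma lintegral_sq_add_indicator_exp_lt_top {μ : Measure α} {f : α → ℝ} (hf : Measurable f)
    (hsq : ∫⁻ a, ENNReal.ofReal (f a ^ 2) ∂μ < ∞)
    (hexp : ∀ E, MeasurableSet E → μ E < ∞ → ∫⁻ a in E, ENNReal.ofReal (exp (f a)) ∂μ < ∞) :
    ∫⁻ a, ENNReal.ofReal (f a ^ 2 + (Ioi 1).indicator exp (f a)) ∂μ < ∞ := by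
  set E := f ⁻¹' Ioi 1
  have hE : MeasurableSet E := hf measurableSet_Ioi
  have hμE : μ E < ∞ := by
    have hsub : E ⊆ {a | 1 ≤ ENNReal.ofReal (f a ^ 2)} := fun a (ha : 1 < f a) => by
      simp only [mem_ofPred_eq, ENNReal.one_le_ofReal]
      nlinarith
    calc μ E ≤ μ {a | 1 ≤ ENNReal.ofReal (f a ^ 2)} := measure_mono hsub
      _ ≤ ∫⁻ a, ENNReal.ofReal (f a ^ 2) ∂μ := by
        simpa only [one_mul] using
          mul_meas_ge_le_lintegral₀ (μ := μ) (hf.pow_const 2).ennreal_ofReal.aemeasurable 1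
      _ < ∞ := hsq
  have hsplit : ∀ a, ENNReal.ofReal (f a ^ 2 + (Ioi 1).indicator exp (f a))
      = ENNReal.ofReal (f a ^ 2) + E.indicator (fun a => ENNReal.ofReal (exp (f a))) a := by
    intro a
    rw [ENNReal.ofReal_add (sq_nonneg _) (indicator_nonneg (fun _ _ => (exp_pos _).le) _)]
    by_cases ha : a ∈ E
    · rw [indicator_of_mem ha, indicator_of_mem (show f a ∈ Ioi 1 from ha)]
    · rw [indicator_of_notMem ha, indicator_of_notMem (show f a ∉ Ioi 1 from ha),
        ENNReal.ofReal_zero]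
  simp_rw [hsplit]
  rw [lintegral_add_left (hf.pow_const 2).ennreal_ofReal, lintegral_indicator hE]
  exact ENNReal.add_lt_top.2 ⟨hsq, hexp E hE hμE⟩

lemma exists_isCompact_setLIntegral_univ_prod_compl_le {𝕏 : Type*} [TopologicalSpace 𝕏]
    [PolishSpace 𝕏] [MeasurableSpace 𝕏] [BorelSpace 𝕏] (μ : Measure (α × 𝕏))
    {G : α × 𝕏 → ℝ≥0∞} (hG : ∫⁻ q, G q ∂μ ≠ ∞) {δ : ℝ≥0∞} (hδ : 0 < δ) :
    ∃ K : Set 𝕏, IsCompact K ∧ ∫⁻ q in univ ×ˢ Kᶜ, G q ∂μ ≤ δ := by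
  have : IsFiniteMeasure ((μ.withDensity G).map Prod.snd) :=
    ⟨by rwa [Measure.map_apply measurable_snd .univ, preimage_univ, withDensity_apply _ .univ,
      Measure.restrict_univ, lt_top_iff_ne_top]⟩
  obtain ⟨K, hK, hKδ⟩ := isTightMeasureSet_iff_exists_isCompact_measure_compl_le.1
    (isTightMeasureSet_singleton (μ := (μ.withDensity G).map Prod.snd)) δ hδ
  refine ⟨K, hK, ?_⟩
  have hKc := hK.measurableSet.compl
  have hμK := hKδ _ rfl
  rwa [Measure.map_apply measurable_snd hKc, withDensity_apply _ (measurable_snd hKc),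
    ← univ_prod] at hμK

end

theorem stmt_3_general
    {𝕏 : Type*} [TopologicalSpace 𝕏] [PolishSpace 𝕏]
    [MeasurableSpace 𝕏] [BorelSpace 𝕏]
    (νT : Measure (ℝ × 𝕏))
    (h : ℝ × 𝕏 → ℝ) (hm : Measurable h)
    (hL2 : ∫⁻ q, ENNReal.ofReal (|h q| ^ 2) ∂νT < ⊤)
    (hexp : ∀ δ : ℝ, 0 < δ → ∀ E : Set (ℝ × 𝕏), MeasurableSet E → νT E < ⊤ →
        ∫⁻ q in E, ENNReal.ofReal (Real.exp (δ * |h q|)) ∂νT < ⊤)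
    (N : ℕ) :
    ∀ ε : ℝ, 0 < ε → ∃ Kε : Set 𝕏, IsCompact Kε ∧
      ∀ g ∈ {g : ℝ × 𝕏 → ℝ | Measurable g ∧ (∀ q, 0 ≤ g q) ∧
          ∫⁻ q, ENNReal.ofReal (g q * Real.log (g q) - g q + 1) ∂νT ≤ (N : ℝ≥0∞)},
        ∫⁻ q in (Set.univ : Set ℝ) ×ˢ Kεᶜ, ENNReal.ofReal (|h q| * |g q - 1|) ∂νT
          ≤ ENNReal.ofReal ε := by
  intro ε hε
  set σ : ℝ := (N + 1) / ε
  have hσ : 0 < σ := by positivity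
  set G : ℝ × 𝕏 → ℝ≥0∞ := fun q =>
    ENNReal.ofReal ((σ * |h q|) ^ 2 + (Ioi 1).indicator exp (σ * |h q|))
  have hGmeas : Measurable G :=
    (((hm.abs.const_mul σ).pow_const 2).add
      ((measurable_exp.indicator measurableSet_Ioi).comp (hm.abs.const_mul σ))).ennreal_ofReal
  have hG : ∫⁻ q, G q ∂νT ≠ ∞ := by
    refine (lintegral_sq_add_indicator_exp_lt_top (hm.abs.const_mul σ) ?_ (hexp σ hσ)).ne
    simp_rw [mul_pow, ENNReal.ofReal_mul (sq_nonneg σ)]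
    rw [lintegral_const_mul' _ _ ENNReal.ofReal_ne_top]
    exact ENNReal.mul_lt_top ENNReal.ofReal_lt_top hL2
  obtain ⟨K, hK, hKG⟩ := exists_isCompact_setLIntegral_univ_prod_compl_le νT hG one_pos
  refine ⟨K, hK, fun g ⟨_, hg0, hgN⟩ => ?_⟩
  set l : ℝ × 𝕏 → ℝ≥0∞ := fun q => ENNReal.ofReal (g q * log (g q) - g q + 1)
  rw [← ENNReal.mul_le_mul_iff_right (ENNReal.ofReal_pos.2 hσ).ne' ENNReal.ofReal_ne_top,
    ← lintegral_const_mul' _ _ ENNReal.ofReal_ne_top, ← ENNReal.ofReal_mul hσ.le,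
    div_mul_cancel₀ _ hε.ne']
  calc _ ≤ ∫⁻ q in univ ×ˢ Kᶜ, G q + l q ∂νT :=
        lintegral_mono fun q => ofReal_mul_abs_mul_abs_sub_one_le hσ.le (hg0 q)
    _ = (∫⁻ q in univ ×ˢ Kᶜ, G q ∂νT) + ∫⁻ q in univ ×ˢ Kᶜ, l q ∂νT :=
        lintegral_add_left hGmeas _
    _ ≤ 1 + N := add_le_add hKG ((setLIntegral_le_lintegral _ _).trans hgN)
    _ = ENNReal.ofReal (N + 1) := by
        rw [add_comm]
        exact_mod_cast (ENNReal.ofReal_natCast (N + 1)).symm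

theorem stmt_3
    {𝕏 : Type*} [TopologicalSpace 𝕏] [PolishSpace 𝕏] [LocallyCompactSpace 𝕏]
    [MeasurableSpace 𝕏] [BorelSpace 𝕏]
    (T : ℝ) (hT : 0 < T)
    (ν : Measure 𝕏) [SigmaFinite ν] (hνK : ∀ Kc : Set 𝕏, IsCompact Kc → ν Kc < ⊤)
    (νT : Measure (ℝ × 𝕏)) (hνT : νT = (volume.restrict (Set.Icc 0 T)).prod ν)
    (h : ℝ × 𝕏 → ℝ) (hm : Measurable h)
    (hL2 : ∫⁻ q, ENNReal.ofReal (|h q| ^ 2) ∂νT < ⊤)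
    (hexp : ∀ δ : ℝ, 0 < δ → ∀ E : Set (ℝ × 𝕏), MeasurableSet E → νT E < ⊤ →
        ∫⁻ q in E, ENNReal.ofReal (Real.exp (δ * |h q|)) ∂νT < ⊤)
    (N : ℕ) :
    ∀ ε : ℝ, 0 < ε → ∃ Kε : Set 𝕏, IsCompact Kε ∧
      ∀ g ∈ {g : ℝ × 𝕏 → ℝ | Measurable g ∧ (∀ q, 0 ≤ g q) ∧
          ∫⁻ q, ENNReal.ofReal (g q * Real.log (g q) - g q + 1) ∂νT ≤ (N : ℝ≥0∞)},
        ∫⁻ q in (Set.univ : Set ℝ) ×ˢ Kεᶜ, ENNReal.ofReal (|h q| * |g q - 1|) ∂νT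
          ≤ ENNReal.ofReal ε :=
  stmt_3_general νT h hm hL2 hexp N
end

section
/- For every real p≥2 there exists a constant c_p>0 such that for all x,h∈H: |‖x+h‖^p − ‖x‖^p − p·‖x‖^{p−2}·⟨x,h⟩| ≤ c_p·(‖x‖^{p−2}·‖h‖² + ‖h‖^p), where for p=2 the factor ‖x‖^{p−2} is interpreted as 1. -/
open scoped RealInnerProductSpace

/-!
Write `a = ‖x‖`, `b = ‖h‖`, `s = ⟪x, h⟫`, so that `‖x + h‖ ^ p = (a² + 2s + b²) ^ (p/2)` with
`|s| ≤ ab`. If `a ≤ 5b`, each of the three terms is `O(b ^ p)`. If `a > 5b`, then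
`t = (2s + b²) / a²` satisfies `|t| ≤ 1/2`, the remainder equals
`a ^ p ((1 + t) ^ (p/2) - 1 - (p/2) t) + (p/2) a ^ (p-2) b²`, and the second-order Taylor bound
for `(1 + t) ^ (p/2)` on `[-1/2, 1/2]` makes the first summand `O(a ^ p t²) = O(a ^ (p-2) b²)`.
-/

theorem Convex.abs_sub_sub_deriv_mul_le {f f' f'' : ℝ → ℝ} {s : Set ℝ} {M x y : ℝ}
    (hs : Convex ℝ s) (hf : ∀ t ∈ s, HasDerivWithinAt f (f' t) s t)
    (hf' : ∀ t ∈ s, HasDerivWithinAt f' (f'' t) s t) (hM : ∀ t ∈ s, |f'' t| ≤ M)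
    (hx : x ∈ s) (hy : y ∈ s) :
    |f y - f x - f' x * (y - x)| ≤ M * (y - x) ^ 2 := by
  have hM₀ : 0 ≤ M := (abs_nonneg _).trans (hM x hx)
  have hsub : Set.uIcc x y ⊆ s := hs.ordConnected.uIcc_subset hx hy
  have hlip : ∀ t ∈ Set.uIcc x y, ‖f' t - f' x * 1‖ ≤ M * |y - x| := fun t ht => by
    rw [mul_one]
    calc |f' t - f' x| ≤ M * |t - x| :=
          hs.norm_image_sub_le_of_norm_hasDerivWithin_le hf' hM hx (hsub ht)
      _ ≤ M * |y - x| := mul_le_mul_of_nonneg_left (Set.abs_sub_left_of_mem_uIcc ht) hM₀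
  have key := (convex_uIcc x y).norm_image_sub_le_of_norm_hasDerivWithin_le
    (f := fun t => f t - f' x * t)
    (fun t ht => ((hf t (hsub ht)).mono hsub).sub ((hasDerivWithinAt_id t _).const_mul (f' x)))
    hlip Set.left_mem_uIcc Set.right_mem_uIcc
  calc |f y - f x - f' x * (y - x)| = ‖(f y - f' x * y) - (f x - f' x * x)‖ := by
        rw [Real.norm_eq_abs]; ring_nf
    _ ≤ M * |y - x| * ‖y - x‖ := key
    _ = M * (y - x) ^ 2 := by rw [Real.norm_eq_abs, mul_assoc, abs_mul_abs_self, sq]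

theorem exists_abs_one_add_rpow_sub_le (q : ℝ) :
    ∃ C, 0 ≤ C ∧ ∀ t : ℝ, |t| ≤ 1 / 2 → |(1 + t) ^ q - 1 - q * t| ≤ C * t ^ 2 := by
  set s := Set.Icc (-(1 / 2) : ℝ) (1 / 2)
  have hne : ∀ t ∈ s, 1 + t ≠ 0 := fun t ht => by linarith [ht.1]
  have hderiv : ∀ e : ℝ, ∀ t ∈ s,
      HasDerivWithinAt (fun t => (1 + t) ^ e) (e * (1 + t) ^ (e - 1)) s t := fun e t ht => by
    simpa using (((hasDerivAt_id t).const_add 1).rpow_const (Or.inl (hne t ht))).hasDerivWithinAt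
  obtain ⟨M, hM⟩ := isCompact_Icc.exists_bound_of_continuousOn
    (f := fun t : ℝ => q * ((q - 1) * (1 + t) ^ (q - 1 - 1))) (s := s)
    (continuousOn_const.mul (continuousOn_const.mul
      ((by fun_prop : ContinuousOn (fun t : ℝ => 1 + t) s).rpow_const
        fun t ht => Or.inl (hne t ht))))
  have h0 : (0 : ℝ) ∈ s := by norm_num [s]
  refine ⟨M, (norm_nonneg _).trans (hM 0 h0), fun t ht => ?_⟩
  simpa using (convex_Icc _ _).abs_sub_sub_deriv_mul_le (hderiv q)
    (fun t ht => (hderiv (q - 1) t ht).const_mul q) hM h0 (abs_le.mp ht)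

theorem rpow_eq_sq_rpow_half {r : ℝ} (hr : 0 ≤ r) (p : ℝ) : r ^ p = (r ^ 2) ^ (p / 2) := by
  rw [← Real.rpow_two, ← Real.rpow_mul hr]
  ring_nf

theorem abs_rpow_remainder_le_add_rpow {p a b s : ℝ} (hp : 2 ≤ p) (ha : 0 ≤ a) (hb : 0 ≤ b)
    (hs : |s| ≤ a * b) :
    |(a ^ 2 + 2 * s + b ^ 2) ^ (p / 2) - a ^ p - p * a ^ (p - 2) * s| ≤
      (2 + p) * (a + b) ^ p := by
  have hab : 0 ≤ a + b := add_nonneg ha hb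
  obtain ⟨hs₁, hs₂⟩ := abs_le.mp hs
  have hsq : (a ^ 2 + 2 * s + b ^ 2) ^ (p / 2) ≤ (a + b) ^ p := by
    rw [rpow_eq_sq_rpow_half hab]
    exact Real.rpow_le_rpow (by nlinarith [sq_nonneg (a - b)]) (by nlinarith) (by linarith)
  have hpow : a ^ p ≤ (a + b) ^ p := Real.rpow_le_rpow ha (by linarith) (by linarith)
  have hinner : |a ^ (p - 2) * s| ≤ (a + b) ^ p :=
    calc |a ^ (p - 2) * s| = a ^ (p - 2) * |s| := by
          rw [abs_mul, abs_of_nonneg (Real.rpow_nonneg ha _)]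
      _ ≤ (a + b) ^ (p - 2) * (a + b) ^ 2 :=
          mul_le_mul (Real.rpow_le_rpow ha (by linarith) (by linarith)) (hs.trans (by nlinarith))
            (abs_nonneg _) (Real.rpow_nonneg hab _)
      _ = (a + b) ^ p := by
          rw [← Real.rpow_two, ← Real.rpow_add' hab (by linarith), sub_add_cancel]
  have hlin : |p * a ^ (p - 2) * s| ≤ p * (a + b) ^ p := by
    rw [mul_assoc, abs_mul, abs_of_nonneg (by linarith : (0 : ℝ) ≤ p)]
    exact mul_le_mul_of_nonneg_left hinner (by linarith)
  have hX := Real.rpow_nonneg (by nlinarith [sq_nonneg (a - b)] : 0 ≤ a ^ 2 + 2 * s + b ^ 2)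
    (p / 2)
  have hY := Real.rpow_nonneg ha p
  rw [abs_le] at hlin ⊢
  constructor <;> nlinarith [hlin.1, hlin.2]

theorem abs_rpow_remainder_le_of_five_mul_lt {p a b s C : ℝ} (hp : 0 ≤ p) (hb : 0 ≤ b)
    (hs : |s| ≤ a * b) (hab : 5 * b < a) (hC : 0 ≤ C)
    (htaylor : ∀ t : ℝ, |t| ≤ 1 / 2 → |(1 + t) ^ (p / 2) - 1 - p / 2 * t| ≤ C * t ^ 2) :
    |(a ^ 2 + 2 * s + b ^ 2) ^ (p / 2) - a ^ p - p * a ^ (p - 2) * s| ≤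
      (5 * C + p / 2) * (a ^ (p - 2) * b ^ 2) := by
  have ha : 0 < a := by linarith
  have ha2 : 0 < a ^ 2 := by positivity
  set t := (2 * s + b ^ 2) / a ^ 2 with ht
  obtain ⟨hs₁, hs₂⟩ := abs_le.mp hs
  have hnum : |2 * s + b ^ 2| ≤ 11 / 5 * (a * b) := by
    rw [abs_le]; constructor <;> nlinarith
  have ht_le : |t| ≤ 1 / 2 := by
    rw [ht, abs_div, abs_of_pos ha2, div_le_iff₀ ha2]
    nlinarith
  have ht_sq : a ^ 2 * t ^ 2 ≤ 5 * b ^ 2 := by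
    have : (2 * s + b ^ 2) ^ 2 ≤ 5 * (a * b) ^ 2 := by
      rw [← sq_abs]; nlinarith [abs_nonneg (2 * s + b ^ 2)]
    rw [ht, div_pow, ← mul_div_assoc, div_le_iff₀ (by positivity)]
    nlinarith
  have hsplit : a ^ 2 + 2 * s + b ^ 2 = a ^ 2 * (1 + t) := by
    rw [ht]; field_simp; ring
  have hpow : a ^ p = a ^ (p - 2) * a ^ 2 := by
    rw [← Real.rpow_two, ← Real.rpow_add ha, sub_add_cancel]
  have hexpand : (a ^ 2 + 2 * s + b ^ 2) ^ (p / 2) - a ^ p - p * a ^ (p - 2) * s =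
      a ^ p * ((1 + t) ^ (p / 2) - 1 - p / 2 * t) + p / 2 * (a ^ (p - 2) * b ^ 2) := by
    rw [hsplit, Real.mul_rpow ha2.le (by linarith [(abs_le.mp ht_le).1]),
      ← rpow_eq_sq_rpow_half ha.le, hpow, ht]
    field_simp
    ring
  have hA := Real.rpow_nonneg ha.le (p - 2)
  calc _ ≤ a ^ p * (C * t ^ 2) + p / 2 * (a ^ (p - 2) * b ^ 2) := by
        rw [hexpand]
        refine (abs_add_le _ _).trans (add_le_add ?_ (abs_of_nonneg (by positivity)).le)
        rw [abs_mul, abs_of_nonneg (Real.rpow_nonneg ha.le p)]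
        exact mul_le_mul_of_nonneg_left (htaylor t ht_le) (Real.rpow_nonneg ha.le p)
    _ = C * (a ^ (p - 2) * (a ^ 2 * t ^ 2)) + p / 2 * (a ^ (p - 2) * b ^ 2) := by
        rw [hpow]; ring
    _ ≤ C * (a ^ (p - 2) * (5 * b ^ 2)) + p / 2 * (a ^ (p - 2) * b ^ 2) := by gcongr
    _ = (5 * C + p / 2) * (a ^ (p - 2) * b ^ 2) := by ring

theorem exists_abs_rpow_remainder_le {p : ℝ} (hp : 2 ≤ p) :
    ∃ c, 0 < c ∧ ∀ a b s : ℝ, 0 ≤ a → 0 ≤ b → |s| ≤ a * b →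
      |(a ^ 2 + 2 * s + b ^ 2) ^ (p / 2) - a ^ p - p * a ^ (p - 2) * s| ≤
        c * (a ^ (p - 2) * b ^ 2 + b ^ p) := by
  obtain ⟨C, hC, htaylor⟩ := exists_abs_one_add_rpow_sub_le (p / 2)
  set c := max ((2 + p) * 6 ^ p) (5 * C + p / 2)
  have hc : 0 < c := lt_max_of_lt_left (by positivity)
  refine ⟨c, hc, fun a b s ha hb hs => ?_⟩
  have hA : 0 ≤ a ^ (p - 2) * b ^ 2 := by positivity
  have hB : 0 ≤ b ^ p := by positivity
  rcases le_or_gt a (5 * b) with hab | hab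
  · calc _ ≤ (2 + p) * (a + b) ^ p := abs_rpow_remainder_le_add_rpow hp ha hb hs
      _ ≤ (2 + p) * (6 * b) ^ p := by gcongr; linarith
      _ = (2 + p) * 6 ^ p * b ^ p := by rw [Real.mul_rpow (by norm_num) hb, mul_assoc]
      _ ≤ c * (a ^ (p - 2) * b ^ 2 + b ^ p) := by
          gcongr
          exacts [le_max_left _ _, le_add_of_nonneg_left hA]
  · calc _ ≤ (5 * C + p / 2) * (a ^ (p - 2) * b ^ 2) :=
          abs_rpow_remainder_le_of_five_mul_lt (by linarith) hb hs hab hC htaylor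
      _ ≤ c * (a ^ (p - 2) * b ^ 2 + b ^ p) := by
          gcongr
          exacts [le_max_right _ _, le_add_of_nonneg_right hB]

theorem stmt_8
    {H : Type*} [NormedAddCommGroup H] [InnerProductSpace ℝ H] :
    ∀ p : ℝ, 2 ≤ p → ∃ c : ℝ, 0 < c ∧ ∀ x h : H,
      |‖x + h‖ ^ p - ‖x‖ ^ p - p * ‖x‖ ^ (p - 2) * ⟪x, h⟫| ≤
        c * (‖x‖ ^ (p - 2) * ‖h‖ ^ (2 : ℕ) + ‖h‖ ^ p) := by
  intro p hp
  obtain ⟨c, hc, hbound⟩ := exists_abs_rpow_remainder_le hp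
  refine ⟨c, hc, fun x h => ?_⟩
  rw [rpow_eq_sq_rpow_half (norm_nonneg (x + h)), norm_add_sq_real]
  exact hbound _ _ _ (norm_nonneg x) (norm_nonneg h) (abs_real_inner_le_norm x h)
end
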